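/- arXiv:1609.05185 — 10 statements merged into one kernel-verified Lean document; each statement's English description precedes it below -/
import Mathlib

section
/- Let e_0, e_t, e_1, e_∞ ∈ ℂ∖{0} with e_0e_te_1e_∞ = 1, and set a_l = e_l + e_l^{-1} for l ∈ {0,t,1,∞}. Then the point X_0 = e_te_1 + (e_te_1)^{-1}, X_t = e_1e_0 + (e_1e_0)^{-1}, X_1 = e_0e_t + (e_0e_t)^{-1} is a singular point of the surface {F(X;a) = 0}: at this point F = 0 and F_{X_0} = F_{X_t} = F_{X_1} = 0. -/
noncomputable section

/-- The Fricke polynomial `F(X0, Xt, X1; a0, at, a1, a∞)` of the PVI character variety. -/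
def FVI (a0 aT a1 aI X0 XT X1 : ℂ) : ℂ :=
  X0 * XT * X1 + X0 ^ 2 + XT ^ 2 + X1 ^ 2
    - (a0 * aI + aT * a1) * X0 - (aT * aI + a1 * a0) * XT - (a1 * aI + a0 * aT) * X1
    + (a0 * aT * a1 * aI + a0 ^ 2 + aT ^ 2 + a1 ^ 2 + aI ^ 2 - 4)

/-- `F_{X_0} = Xt X1 + 2 X0 − θ_0`. -/
def FVIX0 (a0 aT a1 aI X0 XT X1 : ℂ) : ℂ := XT * X1 + 2 * X0 - (a0 * aI + aT * a1)

/-- `F_{X_t} = X1 X0 + 2 Xt − θ_t`. -/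
def FVIXT (a0 aT a1 aI X0 XT X1 : ℂ) : ℂ := X1 * X0 + 2 * XT - (aT * aI + a1 * a0)

/-- `F_{X_1} = X0 Xt + 2 X1 − θ_1`. -/
def FVIX1 (a0 aT a1 aI X0 XT X1 : ℂ) : ℂ := X0 * XT + 2 * X1 - (a1 * aI + a0 * aT)

/-! The point comes from the upper triangular representation with diagonal entries `e_l`, whose
trace coordinates are `X_0 = e_t e_1 + e_0 e_∞` etc. and `a_l = e_l + (product of the other three)`
once `e_0 e_t e_1 e_∞ = 1` is used to clear the inverses. In these polynomial coordinates `F` and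
its partial derivatives are divisible by `e_0 e_t e_1 e_∞ - 1`, the value of `F` even by its square. -/

section ReducibleCoordinates

variable (e0 et e1 eI : ℂ)

theorem FVI_at_reducible :
    FVI (e0 + et * e1 * eI) (et + e0 * e1 * eI) (e1 + e0 * et * eI) (eI + e0 * et * e1)
        (et * e1 + e0 * eI) (e1 * e0 + et * eI) (e0 * et + e1 * eI) =
      (e0 * et * e1 * eI - 1) ^ 2 * (e0 ^ 2 + et ^ 2 + e1 ^ 2 + eI ^ 2 + e0 * et * e1 * eI - 4) := by
  unfold FVI
  ring

theorem FVIX0_at_reducible :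
    FVIX0 (e0 + et * e1 * eI) (et + e0 * e1 * eI) (e1 + e0 * et * eI) (eI + e0 * et * e1)
        (et * e1 + e0 * eI) (e1 * e0 + et * eI) (e0 * et + e1 * eI) =
      (1 - e0 * et * e1 * eI) * (et * e1 + e0 * eI) := by
  unfold FVIX0
  ring

theorem FVIXT_at_reducible :
    FVIXT (e0 + et * e1 * eI) (et + e0 * e1 * eI) (e1 + e0 * et * eI) (eI + e0 * et * e1)
        (et * e1 + e0 * eI) (e1 * e0 + et * eI) (e0 * et + e1 * eI) =
      (1 - e0 * et * e1 * eI) * (e1 * e0 + et * eI) := by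
  unfold FVIXT
  ring

theorem FVIX1_at_reducible :
    FVIX1 (e0 + et * e1 * eI) (et + e0 * e1 * eI) (e1 + e0 * et * eI) (eI + e0 * et * e1)
        (et * e1 + e0 * eI) (e1 * e0 + et * eI) (e0 * et + e1 * eI) =
      (1 - e0 * et * e1 * eI) * (e0 * et + e1 * eI) := by
  unfold FVIX1
  ring

end ReducibleCoordinates

theorem reducible_singular_point_general
    (e0 et e1 eI : ℂ)
    (hprod : e0 * et * e1 * eI = 1)
    (a0 aT a1 aI : ℂ)
    (ha0 : a0 = e0 + e0⁻¹) (haT : aT = et + et⁻¹)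
    (ha1 : a1 = e1 + e1⁻¹) (haI : aI = eI + eI⁻¹)
    (X0 XT X1 : ℂ)
    (hX0 : X0 = et * e1 + (et * e1)⁻¹)
    (hXT : XT = e1 * e0 + (e1 * e0)⁻¹)
    (hX1 : X1 = e0 * et + (e0 * et)⁻¹) :
    FVI a0 aT a1 aI X0 XT X1 = 0 ∧
    FVIX0 a0 aT a1 aI X0 XT X1 = 0 ∧
    FVIXT a0 aT a1 aI X0 XT X1 = 0 ∧
    FVIX1 a0 aT a1 aI X0 XT X1 = 0 := by
  have inv0 : e0⁻¹ = et * e1 * eI := inv_eq_of_mul_eq_one_right (by linear_combination hprod)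
  have invT : et⁻¹ = e0 * e1 * eI := inv_eq_of_mul_eq_one_right (by linear_combination hprod)
  have inv1 : e1⁻¹ = e0 * et * eI := inv_eq_of_mul_eq_one_right (by linear_combination hprod)
  have invI : eI⁻¹ = e0 * et * e1 := inv_eq_of_mul_eq_one_right (by linear_combination hprod)
  have invT1 : (et * e1)⁻¹ = e0 * eI := inv_eq_of_mul_eq_one_right (by linear_combination hprod)
  have inv10 : (e1 * e0)⁻¹ = et * eI := inv_eq_of_mul_eq_one_right (by linear_combination hprod)
  have inv0T : (e0 * et)⁻¹ = e1 * eI := inv_eq_of_mul_eq_one_right (by linear_combination hprod)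
  subst ha0 haT ha1 haI hX0 hXT hX1
  rw [inv0, invT, inv1, invI, invT1, inv10, inv0T, FVI_at_reducible, FVIX0_at_reducible,
    FVIXT_at_reducible, FVIX1_at_reducible, hprod]
  norm_num

/-- **Singular point of `S_VI(a)` coming from a reducible representation.**
If `e_0 e_t e_1 e_∞ = 1`, then `(e_te_1 + (e_te_1)⁻¹, e_1e_0 + (e_1e_0)⁻¹, e_0e_t + (e_0e_t)⁻¹)`
is a singular point of `{F = 0}`. -/
theorem reducible_singular_point
    (e0 et e1 eI : ℂ) (he0 : e0 ≠ 0) (het : et ≠ 0) (he1 : e1 ≠ 0) (heI : eI ≠ 0)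
    (hprod : e0 * et * e1 * eI = 1)
    (a0 aT a1 aI : ℂ)
    (ha0 : a0 = e0 + e0⁻¹) (haT : aT = et + et⁻¹)
    (ha1 : a1 = e1 + e1⁻¹) (haI : aI = eI + eI⁻¹)
    (X0 XT X1 : ℂ)
    (hX0 : X0 = et * e1 + (et * e1)⁻¹)
    (hXT : XT = e1 * e0 + (e1 * e0)⁻¹)
    (hX1 : X1 = e0 * et + (e0 * et)⁻¹) :
    FVI a0 aT a1 aI X0 XT X1 = 0 ∧
    FVIX0 a0 aT a1 aI X0 XT X1 = 0 ∧
    FVIXT a0 aT a1 aI X0 XT X1 = 0 ∧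
    FVIX1 a0 aT a1 aI X0 XT X1 = 0 :=
  reducible_singular_point_general e0 et e1 eI hprod a0 aT a1 aI ha0 haT ha1 haI X0 XT X1 hX0 hXT
    hX1
end
end

section
/- Let a_0, a_t, a_1 ∈ ℂ, let ε ∈ {1,−1}, and set a_∞ = 2ε. Then the point X_0 = εa_0, X_t = εa_t, X_1 = εa_1 is a singular point of the surface {F(X;a) = 0}: at this point F = 0 and F_{X_0} = F_{X_t} = F_{X_1} = 0. -/
/-!
On the line `a_∞ = 2ε`, `X = ε a`, the Fricke polynomial and each of its partial derivatives
are polynomial multiples of `ε² - 1`, so all four vanish once `ε = ±1`.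
-/

noncomputable section

section ScaledPoint

variable (a0 aT a1 ε : ℂ)

theorem FVI_two_mul_scaled :
    FVI a0 aT a1 (2 * ε) (ε * a0) (ε * aT) (ε * a1) =
      (ε ^ 2 - 1) * (ε * a0 * aT * a1 - (a0 ^ 2 + aT ^ 2 + a1 ^ 2) + 4) := by
  unfold FVI; ring

theorem FVIX0_two_mul_scaled :
    FVIX0 a0 aT a1 (2 * ε) (ε * a0) (ε * aT) (ε * a1) = (ε ^ 2 - 1) * (aT * a1) := by
  unfold FVIX0; ring

theorem FVIXT_two_mul_scaled :
    FVIXT a0 aT a1 (2 * ε) (ε * a0) (ε * aT) (ε * a1) = (ε ^ 2 - 1) * (a1 * a0) := by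
  unfold FVIXT; ring

theorem FVIX1_two_mul_scaled :
    FVIX1 a0 aT a1 (2 * ε) (ε * a0) (ε * aT) (ε * a1) = (ε ^ 2 - 1) * (a0 * aT) := by
  unfold FVIX1; ring

end ScaledPoint

/-- **Singular point of `S_VI(a)` for `a_∞ = ±2`** (i.e. `M_∞ = ±I`): the point
`(ε a_0, ε a_t, ε a_1)` is a singular point of `{F(·; a_0, a_t, a_1, 2ε) = 0}`. -/
theorem singular_point_ainfty_pm_two
    (a0 aT a1 : ℂ) (ε : ℂ) (hε : ε = 1 ∨ ε = -1) (aI : ℂ) (haI : aI = 2 * ε)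
    (X0 XT X1 : ℂ) (hX0 : X0 = ε * a0) (hXT : XT = ε * aT) (hX1 : X1 = ε * a1) :
    FVI a0 aT a1 aI X0 XT X1 = 0 ∧
    FVIX0 a0 aT a1 aI X0 XT X1 = 0 ∧
    FVIXT a0 aT a1 aI X0 XT X1 = 0 ∧
    FVIX1 a0 aT a1 aI X0 XT X1 = 0 := by
  have hε_sq : ε ^ 2 - 1 = 0 := by rcases hε with rfl | rfl <;> norm_num
  subst haI hX0 hXT hX1
  simp only [FVI_two_mul_scaled, FVIX0_two_mul_scaled, FVIXT_two_mul_scaled,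
    FVIX1_two_mul_scaled, hε_sq, zero_mul, and_self]
end
end

section
/- Let a = (a_0, a_t, a_1, a_∞) ∈ ℂ⁴. Define the monodromy maps g_{0t}², g_{t1}²: ℂ³ → ℂ³ by g_{0t}²(X) = (X_0 − F_{X_0}, X_t − F_{X_t} + X_1F_{X_0}, X_1) and g_{t1}²(X) = (X_0, X_t − F_{X_t}, X_1 − F_{X_1} + X_0F_{X_t}), where all partial derivatives are evaluated at (X;a). Then F(g_{0t}²(X); a) = F(X; a) and F(g_{t1}²(X); a) = F(X; a) for all X ∈ ℂ³. -/
/-!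
`F` is a monic quadratic in each of its variables, so the Vieta involution
`s_i : X_i ↦ X_i − F_{X_i}`, which swaps the two roots of `F = const` in `X_i`, preserves `F`.
Since `F_{X_t}` is affine in `X_0` with slope `X_1`, one has `g_{0t}² = s_t ∘ s_0`, and likewise
`g_{t1}² = s_1 ∘ s_t`.
-/

noncomputable section

theorem monic_quadratic_vieta {R : Type*} [CommRing R] (b c x : R) :
    (x - (2 * x + b)) ^ 2 + b * (x - (2 * x + b)) + c = x ^ 2 + b * x + c := by
  ring

section Fricke

variable (a0 aT a1 aI X0 XT X1 : ℂ)

theorem FVI_eq_quadratic_X0 :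
    FVI a0 aT a1 aI X0 XT X1
      = X0 ^ 2 + (XT * X1 - (a0 * aI + aT * a1)) * X0 + FVI a0 aT a1 aI 0 XT X1 := by
  unfold FVI
  ring

theorem FVIX0_eq : FVIX0 a0 aT a1 aI X0 XT X1 = 2 * X0 + (XT * X1 - (a0 * aI + aT * a1)) := by
  unfold FVIX0
  ring

/-- Cyclic symmetry `(0, t, 1) → (t, 1, 0)`; under it `F_{X_t}` and `F_{X_1}` become `F_{X_0}`. -/
theorem FVI_rotate : FVI a0 aT a1 aI X0 XT X1 = FVI aT a1 a0 aI XT X1 X0 := by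
  unfold FVI
  ring

theorem FVI_vieta_X0 :
    FVI a0 aT a1 aI (X0 - FVIX0 a0 aT a1 aI X0 XT X1) XT X1 = FVI a0 aT a1 aI X0 XT X1 := by
  rw [FVI_eq_quadratic_X0 _ _ _ _ (X0 - _), FVI_eq_quadratic_X0 _ _ _ _ X0, FVIX0_eq]
  exact monic_quadratic_vieta _ _ _

theorem FVI_vieta_XT :
    FVI a0 aT a1 aI X0 (XT - FVIXT a0 aT a1 aI X0 XT X1) X1 = FVI a0 aT a1 aI X0 XT X1 := by
  rw [FVI_rotate, FVI_rotate a0 aT a1 aI X0 XT X1]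
  exact FVI_vieta_X0 aT a1 a0 aI XT X1 X0

theorem FVI_vieta_X1 :
    FVI a0 aT a1 aI X0 XT (X1 - FVIX1 a0 aT a1 aI X0 XT X1) = FVI a0 aT a1 aI X0 XT X1 := by
  rw [← FVI_rotate a1 a0 aT aI, ← FVI_rotate a1 a0 aT aI X1 X0 XT]
  exact FVI_vieta_X0 a1 a0 aT aI X1 X0 XT

theorem sub_FVIXT_vieta_X0 :
    XT - FVIXT a0 aT a1 aI (X0 - FVIX0 a0 aT a1 aI X0 XT X1) XT X1
      = XT - FVIXT a0 aT a1 aI X0 XT X1 + X1 * FVIX0 a0 aT a1 aI X0 XT X1 := by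
  unfold FVIXT
  ring

theorem sub_FVIX1_vieta_XT :
    X1 - FVIX1 a0 aT a1 aI X0 (XT - FVIXT a0 aT a1 aI X0 XT X1) X1
      = X1 - FVIX1 a0 aT a1 aI X0 XT X1 + X0 * FVIXT a0 aT a1 aI X0 XT X1 := by
  unfold FVIX1
  ring

end Fricke

/-- **The nonlinear monodromy maps `g_{0t}²` and `g_{t1}²` of Painlevé VI preserve the
Fricke polynomial:** `F(g_{0t}²(X); a) = F(X; a)` and `F(g_{t1}²(X); a) = F(X; a)`. -/
theorem monodromy_preserves_fricke
    (a0 aT a1 aI : ℂ) (X0 XT X1 : ℂ) :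
    FVI a0 aT a1 aI
        (X0 - FVIX0 a0 aT a1 aI X0 XT X1)
        (XT - FVIXT a0 aT a1 aI X0 XT X1 + X1 * FVIX0 a0 aT a1 aI X0 XT X1)
        X1
      = FVI a0 aT a1 aI X0 XT X1 ∧
    FVI a0 aT a1 aI
        X0
        (XT - FVIXT a0 aT a1 aI X0 XT X1)
        (X1 - FVIX1 a0 aT a1 aI X0 XT X1 + X0 * FVIXT a0 aT a1 aI X0 XT X1)
      = FVI a0 aT a1 aI X0 XT X1 := by
  constructor
  · rw [← sub_FVIXT_vieta_X0, FVI_vieta_XT, FVI_vieta_X0]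
  · rw [← sub_FVIX1_vieta_XT, FVI_vieta_X1, FVI_vieta_XT]
end
end

section
/- Let a = (a_0, a_t, a_1, a_∞) ∈ ℂ⁴ and let X ∈ ℂ³ satisfy F(X; a) = 0. Then X is a common fixed point of the two monodromy maps g_{0t}²(X) = (X_0 − F_{X_0}, X_t − F_{X_t} + X_1F_{X_0}, X_1) and g_{t1}²(X) = (X_0, X_t − F_{X_t}, X_1 − F_{X_1} + X_0F_{X_t}) if and only if F_{X_0}(X;a) = F_{X_t}(X;a) = F_{X_1}(X;a) = 0, i.e. if and only if X is a singular point of the surface {F(·;a) = 0}. -/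
noncomputable section

/-! Both squared monodromy maps are shears: `g_{0t}²` moves `X_0` by `F_{X_0}` and then `X_t` by
`F_{X_t} - X_1 F_{X_0}`, so it fixes `X` exactly when `F_{X_0} = F_{X_t} = 0`; likewise `g_{t1}²`
fixes `X` exactly when `F_{X_t} = F_{X_1} = 0`. -/
theorem sub_eq_self_and_sub_add_mul_eq_self_iff {R : Type*} [Ring R] (x y c p q : R) :
    (x - p = x ∧ y - q + c * p = y) ↔ p = 0 ∧ q = 0 := by
  constructor
  · rintro ⟨hx, hy⟩
    have hp : p = 0 := by simpa using hx
    exact ⟨hp, by simpa [hp] using hy⟩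
  · rintro ⟨rfl, rfl⟩
    simp

theorem monodromy_fixed_points_iff_singular_general
    (a0 aT a1 aI : ℂ) (X0 XT X1 : ℂ) :
    (((X0 - FVIX0 a0 aT a1 aI X0 XT X1,
       XT - FVIXT a0 aT a1 aI X0 XT X1 + X1 * FVIX0 a0 aT a1 aI X0 XT X1,
       X1) : ℂ × ℂ × ℂ) = (X0, XT, X1) ∧
     ((X0,
       XT - FVIXT a0 aT a1 aI X0 XT X1,
       X1 - FVIX1 a0 aT a1 aI X0 XT X1 + X0 * FVIXT a0 aT a1 aI X0 XT X1) : ℂ × ℂ × ℂ)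
        = (X0, XT, X1))
    ↔ (FVIX0 a0 aT a1 aI X0 XT X1 = 0 ∧ FVIXT a0 aT a1 aI X0 XT X1 = 0 ∧
       FVIX1 a0 aT a1 aI X0 XT X1 = 0) := by
  simp only [Prod.mk.injEq, and_true, true_and, sub_eq_self_and_sub_add_mul_eq_self_iff]
  tauto

/-- **Fixed points of the PVI monodromy action are exactly the singular points:**
for `X` on the surface `{F(·;a) = 0}`, `X` is fixed by both `g_{0t}²` and `g_{t1}²`
iff all three partial derivatives of `F` vanish at `X`. -/
theorem monodromy_fixed_points_iff_singular
    (a0 aT a1 aI : ℂ) (X0 XT X1 : ℂ) (h : FVI a0 aT a1 aI X0 XT X1 = 0) :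
    (((X0 - FVIX0 a0 aT a1 aI X0 XT X1,
       XT - FVIXT a0 aT a1 aI X0 XT X1 + X1 * FVIX0 a0 aT a1 aI X0 XT X1,
       X1) : ℂ × ℂ × ℂ) = (X0, XT, X1) ∧
     ((X0,
       XT - FVIXT a0 aT a1 aI X0 XT X1,
       X1 - FVIX1 a0 aT a1 aI X0 XT X1 + X0 * FVIXT a0 aT a1 aI X0 XT X1) : ℂ × ℂ × ℂ)
        = (X0, XT, X1))
    ↔ (FVIX0 a0 aT a1 aI X0 XT X1 = 0 ∧ FVIXT a0 aT a1 aI X0 XT X1 = 0 ∧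
       FVIX1 a0 aT a1 aI X0 XT X1 = 0) :=
  monodromy_fixed_points_iff_singular_general a0 aT a1 aI X0 XT X1
end
end

section
/- Let α, β, γ, δ, c_t, c_1 ∈ ℂ with αδ − βγ = 1, and let e_t, e_1 ∈ ℂ∖{0}. Set ẽ_1 = −e_te_1, a_0 = α + δ, a_∞ = δ/(e_te_1) + e_te_1(α + c_tβ + c_1γ + c_tc_1δ), and define the coordinates X_0 = e_te_1 + (e_te_1)^{-1} + e_te_1c_tc_1, W_t = e_te_1(α + γc_1), U_1 = δ. Then F̃(X_0, W_t, U_1; a_0, ẽ_1, a_∞) = 0, i.e. X_0W_tU_1 + W_t² + U_1² − θ̃_0X_0 − θ̃_tW_t − θ̃_1U_1 + θ̃_∞ = 0. -/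
/-! With `s = e_t e_1`, the powers `s⁻¹` in `F̃` evaluated on the confluent data cancel, and what
remains is exactly `s² c_t c_1 (αδ − βγ − 1)`: the Fricke relation is the determinant condition
on `M_0`. -/

noncomputable section

/-- The Painlevé V Fricke polynomial `F̃(X0, Wt, U1; a0, ẽ1, a∞)`, with
`θ̃_0 = −ẽ1`, `θ̃_t = a∞ − ẽ1 a0`, `θ̃_1 = a0 − ẽ1 a∞`, `θ̃_∞ = 1 − ẽ1 a0 a∞ + ẽ1²`. -/
def FV (a0 te1 aI X0 WT U1 : ℂ) : ℂ :=
  X0 * WT * U1 + WT ^ 2 + U1 ^ 2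
    - (-te1) * X0 - (aI - te1 * a0) * WT - (a0 - te1 * aI) * U1
    + (1 - te1 * a0 * aI + te1 ^ 2)

theorem FV_confluent_data_eq (α β γ δ ct c1 s : ℂ) (hs : s ≠ 0) :
    FV (α + δ) (-s) (δ / s + s * (α + ct * β + c1 * γ + ct * c1 * δ))
        (s + s⁻¹ + s * ct * c1) (s * (α + γ * c1)) δ
      = s ^ 2 * ct * c1 * (α * δ - β * γ - 1) := by
  unfold FV
  field_simp
  ring

/-- **The confluent monodromy/Stokes data satisfy the PV Fricke relation.**
Here `(α,β,γ,δ)` are the entries of `M_0 ∈ SL(2,ℂ)`, `c_t, c_1` the unfolded Stokes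
data, `ẽ_1 = −e_te_1`, `a_0 = tr M_0`, `a_∞ = δ/(e_te_1) + e_te_1(α + c_tβ + c_1γ + c_tc_1δ)`,
and the coordinates are `X_0 = e_te_1 + (e_te_1)⁻¹ + e_te_1c_tc_1`, `W_t = e_te_1(α + γc_1)`,
`U_1 = δ`. -/
theorem confluent_monodromy_satisfies_PV_fricke
    (α β γ δ ct c1 : ℂ) (hdet : α * δ - β * γ = 1)
    (et e1 : ℂ) (het : et ≠ 0) (he1 : e1 ≠ 0)
    (te1 a0 aI X0 WT U1 : ℂ)
    (hte1 : te1 = -(et * e1))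
    (ha0 : a0 = α + δ)
    (haI : aI = δ / (et * e1) + et * e1 * (α + ct * β + c1 * γ + ct * c1 * δ))
    (hX0 : X0 = et * e1 + (et * e1)⁻¹ + et * e1 * ct * c1)
    (hWT : WT = et * e1 * (α + γ * c1))
    (hU1 : U1 = δ) :
    FV a0 te1 aI X0 WT U1 = 0 := by
  rw [hte1, ha0, haI, hX0, hWT, hU1,
    FV_confluent_data_eq α β γ δ ct c1 (et * e1) (mul_ne_zero het he1), hdet, sub_self, mul_zero]

end
end

section
/- Let a_0, a_∞ ∈ ℂ and ẽ_1 ∈ ℂ∖{0}. Then for all X_0, W_t, U_1 ∈ ℂ: F̃(X_0,W_t,U_1; ã) = (X_0 + ẽ_1 + ẽ_1^{-1})·F̃_{X_0} − ẽ_1·(W_t − U_1/ẽ_1 − a_∞)·(U_1 − W_t/ẽ_1 − a_0), where F̃_{X_0} = U_1W_t + ẽ_1. -/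
noncomputable section

/-- **Line decomposition of the PV Fricke polynomial through `F̃_{X_0}`:**
`F̃ = (X_0 + ẽ_1 + ẽ_1⁻¹) F̃_{X_0} − ẽ_1 (W_t − U_1/ẽ_1 − a_∞)(U_1 − W_t/ẽ_1 − a_0)`,
where `F̃_{X_0} = U_1W_t + ẽ_1`. -/
theorem PV_fricke_decomposition_X0
    (a0 aI : ℂ) (te1 : ℂ) (hte1 : te1 ≠ 0) (X0 WT U1 : ℂ) :
    FV a0 te1 aI X0 WT U1
      = (X0 + te1 + te1⁻¹) * (U1 * WT + te1)
        - te1 * (WT - U1 / te1 - aI) * (U1 - WT / te1 - a0) := by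
  rw [FV]
  field_simp
  ring
end
end

section
/- Let a_0 ∈ ℂ, ẽ_1 ∈ ℂ∖{0}, e_∞ ∈ ℂ∖{0}, and set a_∞ = e_∞ + e_∞^{-1}. Then for all X_0, W_t, U_1 ∈ ℂ: F̃(X_0,W_t,U_1; ã) = (W_t − e_∞)·(F̃_{W_t} − W_t + e_∞) + (U_1 + ẽ_1/e_∞)·(e_∞X_0 + U_1 + ẽ_1e_∞ − a_0), where F̃_{W_t} = X_0U_1 + 2W_t − θ̃_t. -/
noncomputable section

theorem PV_fricke_decomposition_Wt_general
    (a0 : ℂ) (te1 : ℂ) (eI : ℂ) (heI : eI ≠ 0)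
    (aI : ℂ) (haI : aI = eI + eI⁻¹) (X0 WT U1 : ℂ)
    (FW : ℂ) (hFW : FW = X0 * U1 + 2 * WT - (aI - te1 * a0)) :
    FV a0 te1 aI X0 WT U1
      = (WT - eI) * (FW - WT + eI)
        + (U1 + te1 / eI) * (eI * X0 + U1 + te1 * eI - a0) := by
  subst hFW haI
  unfold FV
  -- As polynomials in `eI` and `eI⁻¹`, the two sides differ by
  -- `(1 - eI * eI⁻¹) * (1 + te1 * X0 + te1 ^ 2)`.
  linear_combination -(1 + te1 * X0 + te1 ^ 2) * mul_inv_cancel₀ heI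

/-- **Line decomposition of the PV Fricke polynomial through `F̃_{W_t}`:**
with `a_∞ = e_∞ + e_∞⁻¹`,
`F̃ = (W_t − e_∞)(F̃_{W_t} − W_t + e_∞) + (U_1 + ẽ_1/e_∞)(e_∞X_0 + U_1 + ẽ_1e_∞ − a_0)`,
where `F̃_{W_t} = X_0U_1 + 2W_t − θ̃_t`. -/
theorem PV_fricke_decomposition_Wt
    (a0 : ℂ) (te1 : ℂ) (hte1 : te1 ≠ 0) (eI : ℂ) (heI : eI ≠ 0)
    (aI : ℂ) (haI : aI = eI + eI⁻¹) (X0 WT U1 : ℂ)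
    (FW : ℂ) (hFW : FW = X0 * U1 + 2 * WT - (aI - te1 * a0)) :
    FV a0 te1 aI X0 WT U1
      = (WT - eI) * (FW - WT + eI)
        + (U1 + te1 / eI) * (eI * X0 + U1 + te1 * eI - a0) :=
  PV_fricke_decomposition_Wt_general a0 te1 eI heI aI haI X0 WT U1 FW hFW
end
end

section
/- Let e_0, e_t, e_1, e_∞ ∈ ℂ∖{0} and set a_0 = e_0 + e_0^{-1}, a_∞ = e_∞ + e_∞^{-1}, ã_1 = −e_te_1 − (e_te_1)^{-1}. Then a_0² + ã_1² + a_∞² + a_0ã_1a_∞ − 4 = (e_0e_te_1e_∞ − 1)(e_0e_te_1 − e_∞)(e_te_1e_∞ − e_0)(e_te_1 − e_0e_∞) / (e_0e_te_1e_∞)². -/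
theorem add_inv_sq_add_add_inv_sq_add_add_inv_sq_sub_mul_sub_four {K : Type*} [Field K]
    {x y z : K} (hx : x ≠ 0) (hy : y ≠ 0) (hz : z ≠ 0) :
    (x + x⁻¹) ^ 2 + (y + y⁻¹) ^ 2 + (z + z⁻¹) ^ 2 - (x + x⁻¹) * (y + y⁻¹) * (z + z⁻¹) - 4
      = (x * y * z - 1) * (x * y - z) * (y * z - x) * (y - x * z) / (x * y * z) ^ 2 := by
  field_simp
  ring

/-- **The singularity polynomial of the PV character variety in terms of exponents:**
with `a_0 = e_0 + e_0⁻¹`, `a_∞ = e_∞ + e_∞⁻¹`, `ã_1 = −e_te_1 − (e_te_1)⁻¹`,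
`a_0² + ã_1² + a_∞² + a_0ã_1a_∞ − 4
  = (e_0e_te_1e_∞ − 1)(e_0e_te_1 − e_∞)(e_te_1e_∞ − e_0)(e_te_1 − e_0e_∞)/(e_0e_te_1e_∞)²`. -/
theorem PV_singularity_polynomial_factorization
    (e0 et e1 eI : ℂ) (he0 : e0 ≠ 0) (het : et ≠ 0) (he1 : e1 ≠ 0) (heI : eI ≠ 0)
    (a0 aI ta1 : ℂ)
    (ha0 : a0 = e0 + e0⁻¹) (haI : aI = eI + eI⁻¹)
    (hta1 : ta1 = -(et * e1) - (et * e1)⁻¹) :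
    a0 ^ 2 + ta1 ^ 2 + aI ^ 2 + a0 * ta1 * aI - 4
      = (e0 * et * e1 * eI - 1) * (e0 * et * e1 - eI) * (et * e1 * eI - e0) *
          (et * e1 - e0 * eI) / (e0 * et * e1 * eI) ^ 2 := by
  subst ha0 haI hta1
  -- `ã_1 = -(y + y⁻¹)` with `y = e_te_1`, so the sign flip turns `- a_0a_1a_∞` into `+ a_0ã_1a_∞`.
  linear_combination
    add_inv_sq_add_add_inv_sq_add_add_inv_sq_sub_mul_sub_four he0 (mul_ne_zero het he1) heI
end

section
/- Work with 3×3 complex matrices with rows and columns indexed by (0,t,1), let E_{ij} denote the elementary matrix with 1 in position (i,j) and 0 elsewhere, and let i denote the imaginary unit. Let s_{0t}, s_{t0}, s_{01}, s_{10}, s_{1t} ∈ ℂ with s_{1t} ≠ 0, and e_0, e_t, e_1 ∈ ℂ∖{0}. Set S_{kl} = I + s_{kl}E_{kl}, N̄ = diag(e_0², e_t², e_1²), Ñ = diag(e_0², e_te_1, e_te_1), C_+ = I + (1/s_{1t})E_{t1} + (−i·e_t/(e_1s_{1t}) − 1)E_{11}, and C_− the matrix with rows (1,0,0), (0, 0,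 e_t/(e_1s_{1t})), (0, i, −i·e_t²/(e_1²s_{1t})). Then: (1) C_+ S_{10} S_{t0} C_+^{-1} = I + (s_{t0} + s_{10}/s_{1t})E_{t0} + (−i·(e_t/e_1)·(s_{10}/s_{1t}))E_{10}; (2) C_− Ñ^{-1} N̄ S_{01} S_{0t} N̄^{-1} Ñ C_−^{-1} = I + (s_{0t} + s_{01}s_{1t})E_{0t} + (−i·(e_1/e_t)·s_{0t})E_{01}. -/
/-!
Both identities are conjugations `C X C⁻¹ = Y`. Each follows from the intertwining relation
`C X = Y C`, checked entry by entry, together with the invertibility of `C`; the two connection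
matrices have the same determinant `-i e_t / (e_1 s_{1t})`. In the second identity the diagonal
factor `Ñ⁻¹ N̄ = diag(1, e_t/e_1, e_1/e_t)` is absorbed into the conjugating matrix
`C_− Ñ⁻¹ N̄`.
-/

noncomputable section

open Matrix Complex

theorem SemiconjBy.mul_mul_eq_of_mul_eq_one {M : Type*} [Monoid M] {c c' x y : M}
    (h : SemiconjBy c x y) (hc : c * c' = 1) : c * x * c' = y := by
  rw [h.eq, mul_assoc, hc, mul_one]

theorem Matrix.inv_diagonal_mul_diagonal {n K : Type*} [Fintype n] [DecidableEq n] [Field K]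
    {d : n → K} (hd : ∀ i, d i ≠ 0) (d' : n → K) :
    (diagonal d)⁻¹ * diagonal d' = diagonal (d' / d) := by
  have hinv : (diagonal d)⁻¹ = diagonal d⁻¹ := by
    refine inv_eq_left_inv ?_
    rw [diagonal_mul_diagonal, ← diagonal_one]
    exact congrArg diagonal (funext fun i ↦ inv_mul_cancel₀ (hd i))
  rw [hinv, diagonal_mul_diagonal, div_eq_inv_mul]
  rfl

/-- `C_+`, with the labels `0, t, 1` of rows and columns encoded as `0, 1, 2 : Fin 3`. -/
def connectionPlus (s1t et e1 : ℂ) : Matrix (Fin 3) (Fin 3) ℂ :=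
  1 + single 1 2 (1 / s1t) + single 2 2 (-I * et / (e1 * s1t) - 1)

def connectionMinus (s1t et e1 : ℂ) : Matrix (Fin 3) (Fin 3) ℂ :=
  !![1, 0, 0;
     0, 0, et / (e1 * s1t);
     0, I, -I * et ^ 2 / (e1 ^ 2 * s1t)]

section Connection

variable (s1t et e1 : ℂ)

theorem det_connectionPlus : (connectionPlus s1t et e1).det = -I * et / (e1 * s1t) := by
  rw [connectionPlus, det_fin_three]
  simp [one_apply]

theorem det_connectionMinus : (connectionMinus s1t et e1).det = -I * et / (e1 * s1t) := by
  rw [connectionMinus, det_fin_three]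
  simp
  ring

theorem semiconjBy_connectionPlus (st0 s10 : ℂ) :
    SemiconjBy (connectionPlus s1t et e1) ((1 + single 2 0 s10) * (1 + single 1 0 st0))
      (1 + single 1 0 (st0 + s10 / s1t) + single 2 0 (-I * (et / e1) * (s10 / s1t))) := by
  rw [SemiconjBy, connectionPlus]
  ext i j
  fin_cases i <;> fin_cases j <;> simp [mul_apply, Fin.sum_univ_three, single_apply, one_apply]
    <;> ring

theorem semiconjBy_connectionMinus_mul_diagonal (s0t s01 : ℂ)
    (hs1t : s1t ≠ 0) (het : et ≠ 0) (he1 : e1 ≠ 0) :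
    SemiconjBy (connectionMinus s1t et e1 * diagonal ![1, et / e1, e1 / et])
      ((1 + single 0 2 s01) * (1 + single 0 1 s0t))
      (1 + single 0 1 (s0t + s01 * s1t) + single 0 2 (-I * (e1 / et) * s0t)) := by
  rw [SemiconjBy, connectionMinus]
  ext i j
  fin_cases i <;> fin_cases j
    <;> simp [mul_apply, Fin.sum_univ_three, single_apply, one_apply, vecMul_diagonal]
    <;> field_simp <;> simp only [I_sq] <;> ring

end Connection

/-- **Coefficients of the outer Stokes matrices in terms of the inner Stokes data.**
Rows/columns of the 3×3 matrices are indexed by `Fin 3`, where `0, 1, 2` stand for the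
labels `0, t, 1`. With `S_{kl} = I + s_{kl}E_{kl}`, `N̄ = diag(e_0², e_t², e_1²)`,
`Ñ = diag(e_0², e_te_1, e_te_1)` and the connection matrices `C_±`, one has
`C_+ S_{10} S_{t0} C_+⁻¹ = I + (s_{t0} + s_{10}/s_{1t})E_{t0} + (−i(e_t/e_1)(s_{10}/s_{1t}))E_{10}`
and `C_− Ñ⁻¹ N̄ S_{01} S_{0t} N̄⁻¹ Ñ C_−⁻¹ = I + (s_{0t} + s_{01}s_{1t})E_{0t} + (−i(e_1/e_t)s_{0t})E_{01}`. -/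
theorem outer_stokes_matrices
    (s0t st0 s01 s10 s1t : ℂ) (hs1t : s1t ≠ 0)
    (e0 et e1 : ℂ) (he0 : e0 ≠ 0) (het : et ≠ 0) (he1 : e1 ≠ 0)
    (S0t St0 S01 S10 Nbar Ntil Cp Cm : Matrix (Fin 3) (Fin 3) ℂ)
    (hS0t : S0t = 1 + Matrix.single 0 1 s0t)
    (hSt0 : St0 = 1 + Matrix.single 1 0 st0)
    (hS01 : S01 = 1 + Matrix.single 0 2 s01)
    (hS10 : S10 = 1 + Matrix.single 2 0 s10)
    (hNbar : Nbar = Matrix.diagonal ![e0 ^ 2, et ^ 2, e1 ^ 2])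
    (hNtil : Ntil = Matrix.diagonal ![e0 ^ 2, et * e1, et * e1])
    (hCp : Cp = 1 + Matrix.single 1 2 (1 / s1t)
        + Matrix.single 2 2 (-Complex.I * et / (e1 * s1t) - 1))
    (hCm : Cm = !![1, 0, 0;
                   0, 0, et / (e1 * s1t);
                   0, Complex.I, -Complex.I * et ^ 2 / (e1 ^ 2 * s1t)]) :
    Cp * S10 * St0 * Cp⁻¹
      = 1 + Matrix.single 1 0 (st0 + s10 / s1t)
          + Matrix.single 2 0 (-Complex.I * (et / e1) * (s10 / s1t)) ∧
    Cm * Ntil⁻¹ * Nbar * S01 * S0t * Nbar⁻¹ * Ntil * Cm⁻¹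
      = 1 + Matrix.single 0 1 (s0t + s01 * s1t)
          + Matrix.single 0 2 (-Complex.I * (e1 / et) * s0t) := by
  have hdet : IsUnit (-I * et / (e1 * s1t)) := by simp [I_ne_zero, het, he1, hs1t]
  have hNbar_det : IsUnit Nbar.det := by simp [hNbar, Fin.prod_univ_three, he0, het, he1]
  have hNtil_det : IsUnit Ntil.det := by simp [hNtil, Fin.prod_univ_three, he0, het, he1]
  have hD : Ntil⁻¹ * Nbar = diagonal ![1, et / e1, e1 / et] := by
    rw [hNtil, hNbar, inv_diagonal_mul_diagonal (by simp [Fin.forall_fin_succ, he0, het, he1])]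
    congr 1
    ext i
    fin_cases i <;> simp [he0] <;> field_simp
  obtain rfl : Cp = connectionPlus s1t et e1 := hCp
  obtain rfl : Cm = connectionMinus s1t et e1 := hCm
  subst hS0t hSt0 hS01 hS10
  refine ⟨?_, ?_⟩
  · rw [mul_assoc (connectionPlus s1t et e1)]
    exact (semiconjBy_connectionPlus s1t et e1 st0 s10).mul_mul_eq_of_mul_eq_one
      (mul_nonsing_inv _ (det_connectionPlus s1t et e1 ▸ hdet))
  · calc _ = connectionMinus s1t et e1 * (Ntil⁻¹ * Nbar)
          * ((1 + single 0 2 s01) * (1 + single 0 1 s0t))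
          * (Nbar⁻¹ * Ntil * (connectionMinus s1t et e1)⁻¹) := by simp only [mul_assoc]
      _ = _ := by
        refine (hD ▸ semiconjBy_connectionMinus_mul_diagonal s1t et e1 s0t s01 hs1t het he1)
          |>.mul_mul_eq_of_mul_eq_one ?_
        simp only [mul_assoc, mul_nonsing_inv_cancel_left Nbar _ hNbar_det,
          nonsing_inv_mul_cancel_left Ntil _ hNtil_det]
        exact mul_nonsing_inv _ (det_connectionMinus s1t et e1 ▸ hdet)
end
end

section
/- Work with 3×3 complex matrices with rows and columns indexed by (0,t,1), and let E_{ij} denote the elementary matrix with 1 in position (i,j). Let s_{0t}, s_{t0}, s_{t1}, s_{1t}, s_{01}, s_{10} ∈ ℂ and e_0, e_t, e_1, e_∞ ∈ ℂ∖{0}. Set S_{kl} = I + s_{kl}E_{kl}, N̄ = diag(e_0², e_t², e_1²), M = S_{1t}S_{10}S_{t0}S_{t1}N̄S_{01}S_{0t}, and define X_0 = (e_t² + e_1² + e_1²s_{t1}s_{1t})/(e_te_1), X_t = (e_0² + e_1² + e_0²s_{10}s_{01})/(e_0e_1), X_1 = (e_0² + e_t² + e_0²s_{0t}s_{t0})/(e_0e_t),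 and a_l = e_l + e_l^{-1} for l ∈ {0,t,1,∞}. If the characteristic polynomial of M equals (λ − 1)(λ − e_0e_te_1/e_∞)(λ − e_0e_te_1e_∞), then F(X_0, X_t, X_1; a) = 0. -/
/-!
Write `u = s₀ₜsₜ₀`, `v = sₜ₁s₁ₜ`, `w = s₀₁s₁₀` for the products that enter `X₀, Xₜ, X₁`, and
`c = sₜ₀s₁ₜs₀₁`, `d = s₀ₜsₜ₁s₁₀` for the two cyclic products, so that `cd = uvw`.
Multiplying out `M`, its trace and its second elementary symmetric invariant are affine in
`c` and in `d` respectively, with all other terms expressible through the `X`'s; the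
characteristic polynomial fixes both invariants, hence determines `c` and `d` as functions of
the `X`'s. The relation `cd = uvw` then becomes a single cubic equation in the `X`'s, which
is the Fricke relation: `F` factors as `(X₀ - r₀)(Xₜ - rₜ)(X₁ - r₁) - PQ`, where the three
factors `Xₗ - rₗ` are multiples of `v, w, u` and `P, Q` are the multiples of `c, d` read off
from the two invariants.
-/

open Matrix Polynomial

section Fricke
variable {K : Type*} [Field K]

def fricke (a0 aT a1 aI X0 XT X1 : K) : K :=
  X0 * XT * X1 + X0 ^ 2 + XT ^ 2 + X1 ^ 2
    - (a0 * aI + aT * a1) * X0 - (aT * aI + a1 * a0) * XT - (a1 * aI + a0 * aT) * X1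
    + (a0 * aT * a1 * aI + a0 ^ 2 + aT ^ 2 + a1 ^ 2 + aI ^ 2 - 4)

theorem fricke_eq_prod_sub_mul {e0 et e1 : K} (he0 : e0 ≠ 0) (het : et ≠ 0) (he1 : e1 ≠ 0)
    (aI X0 XT X1 : K) :
    fricke (e0 + e0⁻¹) (et + et⁻¹) (e1 + e1⁻¹) aI X0 XT X1 =
      (X0 - (et / e1 + e1 / et)) * (XT - (e0 / e1 + e1 / e0)) * (X1 - (e0 / et + et / e0))
      - ((1 + e0 ^ 2 + et ^ 2 + e1 ^ 2) / (e0 * et * e1) + aI - X0 / e0 - XT / et - X1 / e1)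
        * (e0 * X0 + et * XT + e1 * X1 - aI - e0 * et * e1
            - (et * e1 / e0 + e0 * e1 / et + e0 * et / e1)) := by
  unfold fricke
  field_simp
  ring

theorem fricke_eq_zero_of_invariants {e0 et e1 : K} (he0 : e0 ≠ 0) (het : et ≠ 0) (he1 : e1 ≠ 0)
    {aI u v w c d : K} (hcd : c * d = u * v * w)
    (htr : e0 ^ 2 + et ^ 2 + e1 ^ 2 + e0 ^ 2 * u + e1 ^ 2 * v + e0 ^ 2 * w + e0 ^ 2 * c
      = 1 + e0 * et * e1 * aI)
    (hσ : et ^ 2 * e1 ^ 2 + e0 ^ 2 * e1 ^ 2 + e0 ^ 2 * et ^ 2 + e0 ^ 2 * e1 ^ 2 * u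
      + e0 ^ 2 * e1 ^ 2 * v + e0 ^ 2 * et ^ 2 * w - e0 ^ 2 * e1 ^ 2 * d
      = e0 * et * e1 * aI + (e0 * et * e1) ^ 2) :
    fricke (e0 + e0⁻¹) (et + et⁻¹) (e1 + e1⁻¹) aI
      ((et ^ 2 + e1 ^ 2 + e1 ^ 2 * v) / (et * e1))
      ((e0 ^ 2 + e1 ^ 2 + e0 ^ 2 * w) / (e0 * e1))
      ((e0 ^ 2 + et ^ 2 + e0 ^ 2 * u) / (e0 * et)) = 0 := by
  rw [fricke_eq_prod_sub_mul he0 het he1]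
  have hP : (1 + e0 ^ 2 + et ^ 2 + e1 ^ 2) / (e0 * et * e1) + aI
      - (et ^ 2 + e1 ^ 2 + e1 ^ 2 * v) / (et * e1) / e0
      - (e0 ^ 2 + e1 ^ 2 + e0 ^ 2 * w) / (e0 * e1) / et
      - (e0 ^ 2 + et ^ 2 + e0 ^ 2 * u) / (e0 * et) / e1 = e0 * c / (et * e1) := by
    field_simp
    linear_combination -htr
  have hQ : e0 * ((et ^ 2 + e1 ^ 2 + e1 ^ 2 * v) / (et * e1))
      + et * ((e0 ^ 2 + e1 ^ 2 + e0 ^ 2 * w) / (e0 * e1))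
      + e1 * ((e0 ^ 2 + et ^ 2 + e0 ^ 2 * u) / (e0 * et)) - aI - e0 * et * e1
      - (et * e1 / e0 + e0 * e1 / et + e0 * et / e1) = e0 * e1 * d / et := by
    field_simp
    linear_combination hσ
  have h0 : (et ^ 2 + e1 ^ 2 + e1 ^ 2 * v) / (et * e1) - (et / e1 + e1 / et) = e1 * v / et := by
    field_simp; ring
  have hT : (e0 ^ 2 + e1 ^ 2 + e0 ^ 2 * w) / (e0 * e1) - (e0 / e1 + e1 / e0) = e0 * w / e1 := by
    field_simp; ring
  have h1 : (e0 ^ 2 + et ^ 2 + e0 ^ 2 * u) / (e0 * et) - (e0 / et + et / e0) = e0 * u / et := by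
    field_simp; ring
  rw [h0, hT, h1, hP, hQ]
  calc _ = e0 ^ 2 / et ^ 2 * (u * v * w - c * d) := by field_simp
    _ = 0 := by rw [hcd, sub_self, mul_zero]

end Fricke

theorem Matrix.charpoly_fin_three {R : Type*} [CommRing R] (A : Matrix (Fin 3) (Fin 3) R) :
    A.charpoly = X ^ 3 - C A.trace * X ^ 2
      + C (A 0 0 * A 1 1 - A 0 1 * A 1 0 + A 0 0 * A 2 2 - A 0 2 * A 2 0
        + A 1 1 * A 2 2 - A 1 2 * A 2 1) * X - C A.det := by
  rw [charpoly, det_fin_three, trace_fin_three, det_fin_three]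
  simp only [charmatrix_apply, diagonal_apply, Fin.reduceEq, if_true, if_false, map_add, map_sub,
    map_mul]
  ring

theorem Polynomial.X_sub_C_mul_X_sub_C_mul_X_sub_C {R : Type*} [CommRing R] (r s t : R) :
    (X - C r) * (X - C s) * (X - C t)
      = X ^ 3 - C (r + s + t) * X ^ 2 + C (r * s + r * t + s * t) * X - C (r * s * t) := by
  simp only [map_add, map_mul]
  ring

theorem Polynomial.eq_of_cubic_eq {R : Type*} [CommRing R] {a b c a' b' c' : R}
    (h : X ^ 3 - C a * X ^ 2 + C b * X - C c = X ^ 3 - C a' * X ^ 2 + C b' * X - C c') :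
    a = a' ∧ b = b' ∧ c = c' := by
  refine ⟨?_, ?_, ?_⟩
  · simpa using congrArg (coeff · 2) h
  · simpa using congrArg (coeff · 1) h
  · simpa using congrArg (coeff · 0) h

theorem stokes_product_eq {R : Type*} [CommRing R] (s0t st0 st1 s1t s01 s10 e0 et e1 : R) :
    (1 + single 2 1 s1t) * (1 + single 2 0 s10) * (1 + single 1 0 st0) * (1 + single 1 2 st1)
      * diagonal ![e0 ^ 2, et ^ 2, e1 ^ 2] * (1 + single 0 2 s01) * (1 + single 0 1 s0t)
    = !![e0 ^ 2, s0t * e0 ^ 2, s01 * e0 ^ 2;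
      st0 * e0 ^ 2, et ^ 2 + s0t * st0 * e0 ^ 2, st1 * e1 ^ 2 + st0 * s01 * e0 ^ 2;
      s10 * e0 ^ 2 + st0 * s1t * e0 ^ 2, s1t * et ^ 2 + s0t * s10 * e0 ^ 2 + s0t * st0 * s1t * e0 ^ 2,
      e1 ^ 2 + s01 * s10 * e0 ^ 2 + st1 * s1t * e1 ^ 2 + st0 * s1t * s01 * e0 ^ 2] := by
  ext i j
  fin_cases i <;> fin_cases j <;>
    simp [mul_apply, Fin.sum_univ_three, single, one_apply, diagonal] <;> ring

/-- **The trace coordinates built from the Stokes data of the 3×3 Birkhoff system satisfy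
the Fricke relation.** Rows/columns are indexed by `Fin 3` (`0, 1, 2` standing for
`0, t, 1`). With `S_{kl} = I + s_{kl}E_{kl}`, `N̄ = diag(e_0², e_t², e_1²)` and
`M = S_{1t}S_{10}S_{t0}S_{t1}N̄S_{01}S_{0t}`: if the characteristic polynomial of `M` is
`(λ−1)(λ−e_0e_te_1/e_∞)(λ−e_0e_te_1e_∞)`, then `F(X_0, X_t, X_1; a) = 0`, where
`X_0 = (e_t² + e_1² + e_1²s_{t1}s_{1t})/(e_te_1)`, `X_t = (e_0² + e_1² + e_0²s_{10}s_{01})/(e_0e_1)`,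
`X_1 = (e_0² + e_t² + e_0²s_{0t}s_{t0})/(e_0e_t)` and `a_l = e_l + e_l⁻¹`. -/
theorem stokes_data_satisfy_fricke
    (s0t st0 st1 s1t s01 s10 : ℂ)
    (e0 et e1 eI : ℂ) (he0 : e0 ≠ 0) (het : et ≠ 0) (he1 : e1 ≠ 0) (heI : eI ≠ 0)
    (S0t St0 St1 S1t S01 S10 Nbar M : Matrix (Fin 3) (Fin 3) ℂ)
    (hS0t : S0t = 1 + Matrix.single 0 1 s0t)
    (hSt0 : St0 = 1 + Matrix.single 1 0 st0)
    (hSt1 : St1 = 1 + Matrix.single 1 2 st1)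
    (hS1t : S1t = 1 + Matrix.single 2 1 s1t)
    (hS01 : S01 = 1 + Matrix.single 0 2 s01)
    (hS10 : S10 = 1 + Matrix.single 2 0 s10)
    (hNbar : Nbar = Matrix.diagonal ![e0 ^ 2, et ^ 2, e1 ^ 2])
    (hM : M = S1t * S10 * St0 * St1 * Nbar * S01 * S0t)
    (hchar : M.charpoly
      = (X - C 1) * (X - C (e0 * et * e1 / eI)) * (X - C (e0 * et * e1 * eI)))
    (a0 aT a1 aI X0 XT X1 : ℂ)
    (ha0 : a0 = e0 + e0⁻¹) (haT : aT = et + et⁻¹)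
    (ha1 : a1 = e1 + e1⁻¹) (haI : aI = eI + eI⁻¹)
    (hX0 : X0 = (et ^ 2 + e1 ^ 2 + e1 ^ 2 * st1 * s1t) / (et * e1))
    (hXT : XT = (e0 ^ 2 + e1 ^ 2 + e0 ^ 2 * s10 * s01) / (e0 * e1))
    (hX1 : X1 = (e0 ^ 2 + et ^ 2 + e0 ^ 2 * s0t * st0) / (e0 * et)) :
    X0 * XT * X1 + X0 ^ 2 + XT ^ 2 + X1 ^ 2
      - (a0 * aI + aT * a1) * X0 - (aT * aI + a1 * a0) * XT - (a1 * aI + a0 * aT) * X1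
      + (a0 * aT * a1 * aI + a0 ^ 2 + aT ^ 2 + a1 ^ 2 + aI ^ 2 - 4) = 0 := by
  subst hS0t hSt0 hSt1 hS1t hS01 hS10 hNbar hM ha0 haT ha1 haI hX0 hXT hX1
  rw [stokes_product_eq, charpoly_fin_three, X_sub_C_mul_X_sub_C_mul_X_sub_C] at hchar
  obtain ⟨htr, hσ, -⟩ := eq_of_cubic_eq hchar
  simp only [trace_fin_three, of_apply, cons_val', cons_val_zero, cons_val_fin_one, cons_val_one,
    cons_val, one_mul] at htr hσ
  have hp : e0 * et * e1 / eI * (e0 * et * e1 * eI) = (e0 * et * e1) ^ 2 := by field_simp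
  have hF := fricke_eq_zero_of_invariants he0 het he1 (aI := eI + eI⁻¹)
    (u := s0t * st0) (v := st1 * s1t) (w := s01 * s10)
    (c := st0 * s1t * s01) (d := s0t * st1 * s10) (by ring)
    (by linear_combination htr) (by linear_combination hσ + hp)
  show fricke _ _ _ _ _ _ _ = 0
  convert hF using 2 <;> ring
end
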